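/- Let (a₁,…,aₙ) be a commuting n-tuple of Moore-Penrose invertible normal elements in a C*-algebra and let (m₁,…,mₙ) be nonnegative integers. Then ∏ᵢ aᵢ^{mᵢ} is Moore-Penrose invertible and (∏ᵢ aᵢ^{mᵢ})† = ∏ᵢ (aᵢ†)^{mᵢ}. -/

import Mathlib

/-!
The Moore–Penrose inverse `b` of `a` lies in the bicommutant of `{a, star a}`: if `c` commutes
with `a` and `star a`, then `c` commutes with the range projection `a * b` (a purely algebraic
fact), and likewise with `b * a`, the range projection of `star a`; this forces `c * b = b * c`.
In particular a normal `a` commutes with its inverse, and by Fuglede–Putnam the elements `a i`,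
`star (a i)` and hence `ad i` of a commuting family of normal elements all commute with each other.
For mutually commuting Moore–Penrose pairs the Penrose equations are multiplicative.
-/

/-- `b` satisfies the four Penrose equations for `a`. -/
def IsMP {R : Type*} [Ring R] [StarRing R] (a b : R) : Prop :=
  a * b * a = a ∧ b * a * b = b ∧ star (b * a) = b * a ∧ star (a * b) = a * b

namespace IsMP

variable {R : Type*} [Ring R] [StarRing R] {a b : R}

theorem one : IsMP (1 : R) 1 := by simp [IsMP]

protected theorem star (h : IsMP a b) : IsMP (star a) (star b) := by
  obtain ⟨h₁, h₂, h₃, h₄⟩ := h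
  refine ⟨?_, ?_, ?_, ?_⟩
  · rw [← star_mul, ← star_mul, ← mul_assoc, h₁]
  · rw [← star_mul, ← star_mul, ← mul_assoc, h₂]
  · rw [← star_mul, star_star, h₄]
  · rw [← star_mul, star_star, h₃]

theorem mul_mul_self_of_commute (h : IsMP a b) {d : R} (hda : Commute d a) :
    a * b * d * (a * b) = d * (a * b) :=
  calc a * b * d * (a * b) = a * b * (d * a) * b := by noncomm_ring
    _ = (a * b * a) * d * b := by rw [hda.eq]; noncomm_ring
    _ = d * (a * b) := by rw [h.1, ← hda.eq, mul_assoc]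

/- With `p = a * b`: `p * c * p = c * p`, and the same identity for `star c`, read through `star`,
gives `p * c * p = p * c`. -/
theorem commute_mul_of_commute_of_commute_star (h : IsMP a b) {c : R} (hca : Commute c a)
    (hcs : Commute c (star a)) : Commute c (a * b) := by
  have hc'a : Commute (star c) a := by simpa using hcs.star_star
  have key := congrArg star (h.mul_mul_self_of_commute hc'a)
  set p := a * b
  have hp : star p = p := h.2.2.2
  simp only [star_mul, star_star, hp] at key
  calc c * p = p * c * p := (h.mul_mul_self_of_commute hca).symm
    _ = p * c := by rw [mul_assoc, key]

theorem commute_of_commute_of_commute_star (h : IsMP a b) {c : R} (hca : Commute c a)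
    (hcs : Commute c (star a)) : Commute c b := by
  have hp : Commute c (a * b) := h.commute_mul_of_commute_of_commute_star hca hcs
  have hq : Commute c (b * a) := by
    have := h.star.commute_mul_of_commute_of_commute_star hcs (by rwa [star_star])
    rwa [← star_mul, h.2.2.1] at this
  calc c * b = c * (b * a) * b := by rw [mul_assoc, h.2.1]
    _ = b * a * (c * b) := by rw [hq.eq, mul_assoc]
    _ = b * (a * c) * b := by noncomm_ring
    _ = b * (c * (a * b)) := by rw [← hca.eq]; noncomm_ring
    _ = b * c := by rw [hp.eq, ← mul_assoc, ← mul_assoc, h.2.1]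

theorem commute_of_isStarNormal (h : IsMP a b) (ha : IsStarNormal a) : Commute a b :=
  h.commute_of_commute_of_commute_star (Commute.refl a) ha.star_comm_self.symm

theorem mul {u v : R} (hab : IsMP a b) (huv : IsMP u v) (hau : Commute a u) (hav : Commute a v)
    (hbu : Commute b u) (hbv : Commute b v) : IsMP (a * u) (b * v) := by
  obtain ⟨a₁, a₂, a₃, a₄⟩ := hab
  obtain ⟨u₁, u₂, u₃, u₄⟩ := huv
  have hAB : a * u * (b * v) = a * b * (u * v) := hbu.symm.mul_mul_mul_comm a v
  have hBA : b * v * (a * u) = b * a * (v * u) := hav.symm.mul_mul_mul_comm b u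
  have hAB' : Commute (a * b) (u * v) := (hau.mul_right hav).mul_left (hbu.mul_right hbv)
  have hBA' : Commute (b * a) (v * u) := (hbv.mul_right hbu).mul_left (hav.mul_right hau)
  refine ⟨?_, ?_, ?_, ?_⟩
  · calc a * u * (b * v) * (a * u) = a * b * a * (u * v * u) := by
          rw [hAB, ← (hau.mul_right hav).symm.mul_mul_mul_comm (a * b) u]
      _ = a * u := by rw [a₁, u₁]
  · calc b * v * (a * u) * (b * v) = b * a * b * (v * u * v) := by
          rw [hBA, ← (hbv.mul_right hbu).symm.mul_mul_mul_comm (b * a) v]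
      _ = b * v := by rw [a₂, u₂]
  · rw [hBA, star_mul, a₃, u₃, hBA'.eq]
  · rw [hAB, star_mul, a₄, u₄, hAB'.eq]

theorem pow (h : IsMP a b) (hab : Commute a b) : ∀ m : ℕ, IsMP (a ^ m) (b ^ m)
  | 0 => by simpa using one
  | m + 1 => by
    rw [pow_succ', pow_succ']
    exact h.mul (h.pow hab m) ((Commute.refl a).pow_right m) (hab.pow_right m)
      (hab.symm.pow_right m) ((Commute.refl b).pow_right m)

theorem list_prod {l : List (R × R)} (hl : ∀ p ∈ l, IsMP p.1 p.2)
    (hc : l.Pairwise fun p q =>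
      Commute p.1 q.1 ∧ Commute p.1 q.2 ∧ Commute p.2 q.1 ∧ Commute p.2 q.2) :
    IsMP (l.map Prod.fst).prod (l.map Prod.snd).prod := by
  induction l with
  | nil => simpa using one
  | cons p l ih =>
    rw [List.pairwise_cons] at hc
    have hp := hl p List.mem_cons_self
    have hl' := ih (fun q hq => hl q (List.mem_cons_of_mem p hq)) hc.2
    have prod_map {x : R} (f : R × R → R) (hx : ∀ q ∈ l, Commute x (f q)) :
        Commute x (l.map f).prod :=
      Commute.list_prod_right _ _ fun _ hy => by
        obtain ⟨q, hq, rfl⟩ := List.mem_map.mp hy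
        exact hx q hq
    simp only [List.map_cons, List.prod_cons]
    exact hp.mul hl' (prod_map _ fun q hq => (hc.1 q hq).1)
      (prod_map _ fun q hq => (hc.1 q hq).2.1) (prod_map _ fun q hq => (hc.1 q hq).2.2.1)
      (prod_map _ fun q hq => (hc.1 q hq).2.2.2)

end IsMP

variable {A : Type*} [NormedRing A] [StarRing A] [CStarRing A] [CompleteSpace A]
  [NormedAlgebra ℂ A] [StarModule ℂ A]

theorem stmt15 {n : ℕ} (a ad : Fin n → A) (m : Fin n → ℕ)
    (h : ∀ i, IsMP (a i) (ad i))
    (hnorm : ∀ i, a i * star (a i) = star (a i) * a i)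
    (hc : ∀ i j, i ≠ j → a i * a j = a j * a i) :
    IsMP (List.ofFn fun i => a i ^ m i).prod (List.ofFn fun i => ad i ^ m i).prod := by
  let _ : CStarAlgebra A := {}
  have hnormal (i) : IsStarNormal (a i) := ⟨(hnorm i).symm⟩
  have hAA (i j) (hij : i ≠ j) : Commute (a i) (a j) := hc i j hij
  have hSA (i j) (hij : i ≠ j) : Commute (star (a i)) (a j) :=
    (hnormal i).commute_star_left (hAA i j hij)
  have hAD (i j) (hij : i ≠ j) : Commute (a i) (ad j) :=
    (h j).commute_of_commute_of_commute_star (hAA i j hij) (hSA j i hij.symm).symm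
  have hSD (i j) (hij : i ≠ j) : Commute (star (a i)) (ad j) :=
    (h j).commute_of_commute_of_commute_star (hSA i j hij) (hAA i j hij).star_star
  have hDD (i j) (hij : i ≠ j) : Commute (ad i) (ad j) :=
    (h j).commute_of_commute_of_commute_star (hAD j i hij.symm).symm (hSD j i hij.symm).symm
  have := IsMP.list_prod (l := List.ofFn fun i => (a i ^ m i, ad i ^ m i))
    (by simpa [List.mem_ofFn] using
      fun i => (h i).pow ((h i).commute_of_isStarNormal (hnormal i)) (m i))
    (List.pairwise_ofFn.mpr fun i j hij => ⟨(hAA i j hij.ne).pow_pow _ _,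
      (hAD i j hij.ne).pow_pow _ _, (hAD j i hij.ne').symm.pow_pow _ _,
      (hDD i j hij.ne).pow_pow _ _⟩)
  simpa [List.map_ofFn, Function.comp_def] using this
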